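/- Let N ≥ 1 and let ψ_j, φ_j : ℝ² → ℝ^N (j ∈ ℤ) be smooth functions of (x, z) such that for every j the vector Ablowitz–Ladik lattices hold: ∂_x ψ_j = ψ_{j-1} + ⟨ψ_{j-1},φ_j⟩ψ_j, −∂_x φ_j = φ_{j+1} + ⟨ψ_j,φ_{j+1}⟩φ_j, ∂_z ψ_j = ψ_{j+1} + ⟨ψ_j,φ_j⟩ψ_{j+1}, −∂_z φ_j = φ_{j-1} + ⟨ψ_j,φ_j⟩φ_{j-1}. Then the scalar functions v_j := ⟨ψ_j,φ_j⟩ + 1 and u_j := −⟨ψ_j,φ_{j+1}⟩ satisfy u_j v_j = ⟨ψ_j, ∂_x φ_j⟩ for every j, and they satisfy the two-dimensional Toda lattice: ∂_z u_j = v_j − v_{j+1} and ∂_x v_j = v_j(u_j − u_{j-1}) for every j. -/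

import Mathlib

noncomputable def pdx {V : Type*} [NormedAddCommGroup V] [NormedSpace ℝ V]
    (f : ℝ → ℝ → V) : ℝ → ℝ → V :=
  fun x y => deriv (fun s => f s y) x

noncomputable def pdz {V : Type*} [NormedAddCommGroup V] [NormedSpace ℝ V]
    (f : ℝ → ℝ → V) : ℝ → ℝ → V :=
  fun x y => deriv (fun s => f x s) y

def dot {N : ℕ} (a b : Fin N → ℝ) : ℝ := ∑ i, a i * b i


lemma dot_add_right {N : ℕ} (a b c : Fin N → ℝ) : dot a (b + c) = dot a b + dot a c := by
  simp [dot, mul_add, Finset.sum_add_distrib]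

lemma dot_add_left {N : ℕ} (a b c : Fin N → ℝ) : dot (a + b) c = dot a c + dot b c := by
  simp [dot, add_mul, Finset.sum_add_distrib]

lemma dot_smul_right {N : ℕ} (r : ℝ) (a b : Fin N → ℝ) : dot a (r • b) = r * dot a b := by
  simp [dot, Finset.mul_sum, mul_left_comm]

lemma dot_smul_left {N : ℕ} (r : ℝ) (a b : Fin N → ℝ) : dot (r • a) b = r * dot a b := by
  simp [dot, Finset.mul_sum, mul_assoc]

lemma dot_neg_right {N : ℕ} (a b : Fin N → ℝ) : dot a (-b) = -dot a b := by
  simp [dot, Finset.sum_neg_distrib]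

lemma hasDerivAt_dot {N : ℕ} {f g : ℝ → Fin N → ℝ} {f' g' : Fin N → ℝ} {x : ℝ}
    (hf : HasDerivAt f f' x) (hg : HasDerivAt g g' x) :
    HasDerivAt (fun s => dot (f s) (g s)) (dot f' (g x) + dot (f x) g') x := by
  unfold dot
  rw [← Finset.sum_add_distrib]
  exact HasDerivAt.fun_sum fun i _ =>
    ((hasDerivAt_pi.mp hf i).mul (hasDerivAt_pi.mp hg i))

lemma hasDerivAt_x {V : Type*} [NormedAddCommGroup V] [NormedSpace ℝ V] {f : ℝ → ℝ → V}
    (hf : ContDiff ℝ (⊤ : ℕ∞) (fun p : ℝ × ℝ => f p.1 p.2)) (x z : ℝ) :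
    HasDerivAt (fun s => f s z) (pdx f x z) x := by
  have hd : DifferentiableAt ℝ (fun s => f s z) x := by
    have := (hf.differentiable (by simp)).comp
      ((differentiable_id (𝕜 := ℝ) (E := ℝ)).prodMk (differentiable_const z))
    exact this.differentiableAt
  simpa [pdx] using hd.hasDerivAt

lemma hasDerivAt_z {V : Type*} [NormedAddCommGroup V] [NormedSpace ℝ V] {f : ℝ → ℝ → V}
    (hf : ContDiff ℝ (⊤ : ℕ∞) (fun p : ℝ × ℝ => f p.1 p.2)) (x z : ℝ) :
    HasDerivAt (fun s => f x s) (pdz f x z) z := by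
  have hd : DifferentiableAt ℝ (fun s => f x s) z := by
    have := (hf.differentiable (by simp)).comp
      ((differentiable_const x).prodMk (differentiable_id (𝕜 := ℝ) (E := ℝ)))
    exact this.differentiableAt
  simpa [pdz] using hd.hasDerivAt

theorem vector_Ablowitz_Ladik_gives_Toda (N : ℕ) (hN : 1 ≤ N)
    (ψ φ : ℤ → ℝ → ℝ → (Fin N → ℝ))
    (hψ : ∀ j, ContDiff ℝ (⊤ : ℕ∞) (fun p : ℝ × ℝ => ψ j p.1 p.2))
    (hφ : ∀ j, ContDiff ℝ (⊤ : ℕ∞) (fun p : ℝ × ℝ => φ j p.1 p.2))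
    (hLat₁ : ∀ j x z, pdx (ψ j) x z =
      ψ (j - 1) x z + dot (ψ (j - 1) x z) (φ j x z) • ψ j x z)
    (hLat₂ : ∀ j x z, -pdx (φ j) x z =
      φ (j + 1) x z + dot (ψ j x z) (φ (j + 1) x z) • φ j x z)
    (hLat₃ : ∀ j x z, pdz (ψ j) x z =
      ψ (j + 1) x z + dot (ψ j x z) (φ j x z) • ψ (j + 1) x z)
    (hLat₄ : ∀ j x z, -pdz (φ j) x z =
      φ (j - 1) x z + dot (ψ j x z) (φ j x z) • φ (j - 1) x z)
    (u v : ℤ → ℝ → ℝ → ℝ)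
    (hv : ∀ j x z, v j x z = dot (ψ j x z) (φ j x z) + 1)
    (hu : ∀ j x z, u j x z = -dot (ψ j x z) (φ (j + 1) x z)) :
    (∀ j x z, u j x z * v j x z = dot (ψ j x z) (pdx (φ j) x z)) ∧
    (∀ j x z, pdz (u j) x z = v j x z - v (j + 1) x z) ∧
    (∀ j x z, pdx (v j) x z = v j x z * (u j x z - u (j - 1) x z)) := by
  refine ⟨?_, ?_, ?_⟩
  · intro j x z
    have h2 : pdx (φ j) x z =
        -(φ (j + 1) x z + dot (ψ j x z) (φ (j + 1) x z) • φ j x z) := by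
      rw [← hLat₂ j x z, neg_neg]
    rw [h2, dot_neg_right, dot_add_right, dot_smul_right, hu, hv]
    ring
  · intro j x z
    have hpz : pdz (u j) x z =
        -(dot (pdz (ψ j) x z) (φ (j + 1) x z) + dot (ψ j x z) (pdz (φ (j + 1)) x z)) := by
      have hD := (hasDerivAt_dot (hasDerivAt_z (hψ j) x z) (hasDerivAt_z (hφ (j + 1)) x z)).neg
      have heq : (fun s => u j x s) = (fun s => -dot (ψ j x s) (φ (j + 1) x s)) :=
        funext fun s => hu j x s
      simp only [pdz]
      rw [heq]
      exact hD.deriv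
    have h4 : pdz (φ (j + 1)) x z =
        -(φ j x z + dot (ψ (j + 1) x z) (φ (j + 1) x z) • φ j x z) := by
      have h := hLat₄ (j + 1) x z
      simp only [add_sub_cancel_right] at h
      rw [← h, neg_neg]
    rw [hpz, hLat₃ j x z, h4, dot_add_left, dot_smul_left, dot_neg_right, dot_add_right,
      dot_smul_right, hv, hv]
    ring
  · intro j x z
    have hpx : pdx (v j) x z =
        dot (pdx (ψ j) x z) (φ j x z) + dot (ψ j x z) (pdx (φ j) x z) := by
      have hD := (hasDerivAt_dot (hasDerivAt_x (hψ j) x z) (hasDerivAt_x (hφ j) x z)).add_const 1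
      have heq : (fun s => v j s z) = (fun s => dot (ψ j s z) (φ j s z) + 1) :=
        funext fun s => hv j s z
      simp only [pdx]
      rw [heq]
      exact hD.deriv
    have h2 : pdx (φ j) x z =
        -(φ (j + 1) x z + dot (ψ j x z) (φ (j + 1) x z) • φ j x z) := by
      rw [← hLat₂ j x z, neg_neg]
    have hu' : u (j - 1) x z = -dot (ψ (j - 1) x z) (φ j x z) := by
      simpa using hu (j - 1) x z
    rw [hpx, hLat₁ j x z, h2, dot_add_left, dot_smul_left, dot_neg_right, dot_add_right,
      dot_smul_right, hv, hu j x z, hu']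
    ring
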